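/- Let V be a set of nodes, s, i ∈ V with s ≠ i, and suppose there is a partition V = V₁ ∪ V₂ ∪ V₃ and a bijection ζ : V₂ → V₃ such that p_{s,r}(u) = p_{i,r}(u) for r ∈ V₁ and p_{s,r}(u) = p_{i,ζ(r)}(u), p_{i,r}(u) = p_{s,ζ(r)}(u) for r ∈ V₂, for all u > 0, where p_{a,b}(u) ∈ (0,1) depends only on the distance d(a,b) through a strictly decreasing function of distance. Then for any α ∈ (0,1) and t, t' > 0, E[H_α(i,t')] − E[H_α(s,t')] = ∑_{j∈V₂} (p_{s,j}(t') − p_{i,j}(t'))·(p_{s,j}(t) − p_{i,j}(t)) ≥ 0, where E[H_α(v,t')] = ∑_{j∈V} [(1−α)·p_{s,j}(t)·(1−p_{v,j}(t')) + α·(1−p_{s,j}(t))·p_{v,j}(t')]. -/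

import Mathlib

/-! Per node, replacing the candidate source `s` by `i` changes the expected cost by
`(p_{s,j}(t') - p_{i,j}(t')) (p_{s,j}(t) - α)`. This vanishes on `V₁`, and the bijection `ζ` pairs
each `r ∈ V₂` with `ζ r ∈ V₃`, where the roles of `s` and `i` are exchanged, so the pair contributes
`(p_{s,r}(t') - p_{i,r}(t')) (p_{s,r}(t) - p_{i,r}(t))`: `α` cancels. Both factors are differences
of the same decreasing function of distance at `d(s,r)` and `d(i,r)`, hence have the same sign. -/

open Finset

lemma expectedHamming_sub_expectedHamming (α p q q₀ : ℝ) :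
    ((1 - α) * p * (1 - q) + α * (1 - p) * q) - ((1 - α) * p * (1 - q₀) + α * (1 - p) * q₀) =
      (q₀ - q) * (p - α) := by
  ring

lemma Finset.sum_univ_eq_sum_add_comp_equiv {V : Type*} [Fintype V] [DecidableEq V]
    {M : Type*} [AddCommMonoid M] {V₁ V₂ V₃ : Finset V} (hpart : V₁ ∪ V₂ ∪ V₃ = univ)
    (h12 : Disjoint V₁ V₂) (h13 : Disjoint V₁ V₃) (h23 : Disjoint V₂ V₃)
    (ζ : {x // x ∈ V₂} ≃ {x // x ∈ V₃}) (g : V → M) (hg : ∀ r ∈ V₁, g r = 0) :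
    ∑ j, g j = ∑ r : {x // x ∈ V₂}, (g r + g (ζ r)) := by
  have hV₃ : ∑ j ∈ V₃, g j = ∑ r : {x // x ∈ V₂}, g (ζ r) := by
    rw [← sum_coe_sort V₃, ← Equiv.sum_comp ζ]
  rw [← hpart, sum_union (disjoint_union_left.mpr ⟨h13, h23⟩), sum_union h12,
    sum_eq_zero hg, zero_add, ← sum_coe_sort V₂, hV₃, sum_add_distrib]

theorem stmt_13_general {V : Type*} [Fintype V] [DecidableEq V] (s i : V)
    (d : V → V → ℕ) (f : ℕ → ℝ → ℝ)
    (hanti : ∀ t : ℝ, 0 < t → StrictAnti (fun m : ℕ => f m t))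
    (V₁ V₂ V₃ : Finset V) (hpart : V₁ ∪ V₂ ∪ V₃ = Finset.univ)
    (h12 : Disjoint V₁ V₂) (h13 : Disjoint V₁ V₃) (h23 : Disjoint V₂ V₃)
    (ζ : {x // x ∈ V₂} ≃ {x // x ∈ V₃})
    (hV₁ : ∀ u : ℝ, 0 < u → ∀ r ∈ V₁, f (d s r) u = f (d i r) u)
    (hV₂ : ∀ u : ℝ, 0 < u → ∀ r : {x // x ∈ V₂},
      f (d s r) u = f (d i (ζ r)) u ∧ f (d i r) u = f (d s (ζ r)) u)
    (α : ℝ) (t t' : ℝ) (ht : 0 < t) (ht' : 0 < t') :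
    (∑ j, ((1 - α) * f (d s j) t * (1 - f (d i j) t') +
        α * (1 - f (d s j) t) * f (d i j) t')) -
      (∑ j, ((1 - α) * f (d s j) t * (1 - f (d s j) t') +
        α * (1 - f (d s j) t) * f (d s j) t')) =
      ∑ j ∈ V₂, (f (d s j) t' - f (d i j) t') * (f (d s j) t - f (d i j) t) ∧
    0 ≤ ∑ j ∈ V₂, (f (d s j) t' - f (d i j) t') * (f (d s j) t - f (d i j) t) := by
  refine ⟨?_, sum_nonneg fun j _ => ?_⟩
  · rw [← sum_sub_distrib]
    simp only [expectedHamming_sub_expectedHamming]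
    rw [sum_univ_eq_sum_add_comp_equiv hpart h12 h13 h23 ζ _
      fun r hr => by rw [hV₁ t' ht' r hr, sub_self, zero_mul], ← sum_coe_sort V₂]
    refine sum_congr rfl fun r _ => ?_
    rw [← (hV₂ t ht r).2, ← (hV₂ t' ht' r).1, ← (hV₂ t' ht' r).2]
    ring
  · exact ((hanti t' ht').antitone.monovary (hanti t ht).antitone).sub_mul_sub_nonneg _ _

theorem stmt_13 {V : Type*} [Fintype V] [DecidableEq V] (s i : V) (hsi : s ≠ i)
    (d : V → V → ℕ) (f : ℕ → ℝ → ℝ)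
    (hanti : ∀ t : ℝ, 0 < t → StrictAnti (fun m : ℕ => f m t))
    (hrange : ∀ (m : ℕ) (t : ℝ), 0 < t → f m t ∈ Set.Ioo (0 : ℝ) 1)
    (V₁ V₂ V₃ : Finset V) (hpart : V₁ ∪ V₂ ∪ V₃ = Finset.univ)
    (h12 : Disjoint V₁ V₂) (h13 : Disjoint V₁ V₃) (h23 : Disjoint V₂ V₃)
    (ζ : {x // x ∈ V₂} ≃ {x // x ∈ V₃})
    (hV₁ : ∀ u : ℝ, 0 < u → ∀ r ∈ V₁, f (d s r) u = f (d i r) u)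
    (hV₂ : ∀ u : ℝ, 0 < u → ∀ r : {x // x ∈ V₂},
      f (d s r) u = f (d i (ζ r)) u ∧ f (d i r) u = f (d s (ζ r)) u)
    (α : ℝ) (hα : α ∈ Set.Ioo (0 : ℝ) 1) (t t' : ℝ) (ht : 0 < t) (ht' : 0 < t') :
    (∑ j, ((1 - α) * f (d s j) t * (1 - f (d i j) t') +
        α * (1 - f (d s j) t) * f (d i j) t')) -
      (∑ j, ((1 - α) * f (d s j) t * (1 - f (d s j) t') +
        α * (1 - f (d s j) t) * f (d s j) t')) =
      ∑ j ∈ V₂, (f (d s j) t' - f (d i j) t') * (f (d s j) t - f (d i j) t) ∧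
    0 ≤ ∑ j ∈ V₂, (f (d s j) t' - f (d i j) t') * (f (d s j) t - f (d i j) t) :=
  stmt_13_general s i d f hanti V₁ V₂ V₃ hpart h12 h13 h23 ζ hV₁ hV₂ α t t' ht ht'
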